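/- Assume Re(ν) > 0 and let ψ: (0,∞) → V be continuous and satisfy the Lewis equation at every x > 0. Define Q_∞(x) = ψ(x) − Σ_{n=1}^∞ (n+x)^{−2ν−1}·η(T'T^{n−1})^{−1}(ψ(1 − 1/(n+x))) for x > 0 (the series converges absolutely since Re(2ν+1) > 1 and ψ is bounded on [1/2,1]). Then Q_∞(x+1) = η(T)·Q_∞(x) for all x > 0. -/

import Mathlib

/-!
Applying `η(T)` to the series shifts it: since `T (T'Tⁿ⁺¹)⁻¹ = (T'Tⁿ)⁻¹`, the image of the
`(n+1)`-st term at `x` is the `n`-th term at `x + 1`, while, since `T T'⁻¹ = S T⁻¹`, the image of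
the first term is exactly the extra term of the Lewis equation at `x`. Subtracting from the Lewis
equation `η(T) ψ(x) = ψ(x+1) + …` gives `η(T) Q_∞(x) = Q_∞(x+1)`.

The series converges absolutely: as `η(T)` has finite order only finitely many operators
`η(T'Tⁿ)⁻¹` occur, `ψ` is bounded on `[1 - 1/(1+x), 1]`, which contains all its arguments, and
`|(n+1+x)^(-2ν-1)| = (n+1+x)^(-2 Re ν - 1)` is summable.
-/

open Complex

/-- `SL₂(ℤ)`. -/
abbrev SL2Z := Matrix.SpecialLinearGroup (Fin 2) ℤ

/-- The matrix `T = [[1,1],[0,1]]`. -/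
def Tm : SL2Z := ⟨!![1, 1; 0, 1], by norm_num [Matrix.det_fin_two_of]⟩

/-- The matrix `S = [[0,1],[−1,0]]`. -/
def Sm : SL2Z := ⟨!![0, 1; -1, 0], by norm_num [Matrix.det_fin_two_of]⟩

/-- The matrix `T' = [[1,0],[1,1]]`. -/
def Tm' : SL2Z := ⟨!![1, 0; 1, 1], by norm_num [Matrix.det_fin_two_of]⟩

/-- The matrix `−I`. -/
def negI : SL2Z := ⟨!![-1, 0; 0, -1], by norm_num [Matrix.det_fin_two_of]⟩

/-- `ψ : (0,∞) → V` satisfies the Lewis equation with parameter `ν` at `x`. -/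
def LewisEqR {V : Type*} [NormedAddCommGroup V] [NormedSpace ℂ V]
    (η : SL2Z →* Module.End ℂ V) (ν : ℂ) (ψ : ℝ → V) (x : ℝ) : Prop :=
  η Tm (ψ x) =
    ψ (x + 1) +
      ((((x : ℂ) + 1)) ^ (-2 * ν - 1)) • η (Sm * Tm⁻¹) (ψ (x / (x + 1)))

lemma Tm_mul_inv_Tm' : Tm * Tm'⁻¹ = Sm * Tm⁻¹ := by
  ext i j
  simp only [Matrix.SpecialLinearGroup.coe_mul, Matrix.SpecialLinearGroup.coe_inv,
    Matrix.adjugate_fin_two, Matrix.mul_apply, Fin.sum_univ_two]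
  fin_cases i <;> fin_cases j <;> simp [Tm, Tm', Sm]

lemma Tm_mul_inv_Tm'_mul_Tm_pow_succ (n : ℕ) :
    Tm * (Tm' * Tm ^ (n + 1))⁻¹ = (Tm' * Tm ^ n)⁻¹ := by
  group

lemma MonoidHom.map_inv_mul_pow_mod {G M : Type*} [Group G] [Monoid M] (f : G →* M)
    (g h : G) {N : ℕ} (hN : f h ^ N = 1) (n : ℕ) : f (g * h ^ n)⁻¹ = f (g * h ^ (n % N))⁻¹ := by
  have hinv : f h⁻¹ ^ N = 1 := by
    calc f h⁻¹ ^ N = f h⁻¹ ^ N * f h ^ N := by rw [hN, mul_one]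
      _ = 1 := by rw [← map_pow, ← map_pow, ← map_mul, inv_pow, inv_mul_cancel, map_one]
  simp only [mul_inv_rev, map_mul, ← inv_pow, map_pow, ← pow_eq_pow_mod n hinv]

lemma LinearMap.exists_norm_apply_le_of_finite_range {𝕜 E ι : Type*}
    [NontriviallyNormedField 𝕜] [CompleteSpace 𝕜] [NormedAddCommGroup E] [NormedSpace 𝕜 E]
    [FiniteDimensional 𝕜 E]
    (A : ι → E →ₗ[𝕜] E) (hA : (Set.range A).Finite) :
    ∃ C, 0 ≤ C ∧ ∀ i v, ‖A i v‖ ≤ C * ‖v‖ := by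
  have hB : (Set.range fun i => LinearMap.toContinuousLinearMap (A i)).Finite := by
    simpa only [Set.range_comp'] using hA.image LinearMap.toContinuousLinearMap
  obtain ⟨C, hC⟩ := isBounded_iff_forall_norm_le.mp hB.isBounded
  refine ⟨max C 0, le_max_right C 0, fun i v => ?_⟩
  exact (LinearMap.toContinuousLinearMap (A i)).le_of_opNorm_le
    ((hC _ ⟨i, rfl⟩).trans (le_max_left C 0)) v

lemma summable_add_rpow {p : ℝ} (hp : p < -1) {x : ℝ} (hx : 0 ≤ x) :
    Summable fun n : ℕ => ((n : ℝ) + 1 + x) ^ p := by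
  refine Summable.of_nonneg_of_le (fun n => by positivity) (fun n => ?_)
    ((summable_nat_add_iff 1).mpr (Real.summable_nat_rpow.mpr hp))
  exact Real.rpow_le_rpow_of_nonpos (by positivity) (by push_cast; linarith) (by linarith)

lemma exists_bound_norm_apply_one_sub_one_div {E : Type*} [NormedAddCommGroup E] {ψ : ℝ → E}
    (hψ : ContinuousOn ψ (Set.Ioi 0)) {x : ℝ} (hx : 0 < x) :
    ∃ M, ∀ n : ℕ, ‖ψ (1 - 1 / ((n : ℝ) + 1 + x))‖ ≤ M := by
  have hlow : 0 < 1 - 1 / (1 + x) := by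
    rw [sub_pos, div_lt_one (by positivity)]
    linarith
  obtain ⟨M, hM⟩ := (isCompact_Icc (a := 1 - 1 / (1 + x)) (b := 1)).exists_bound_of_continuousOn
    (hψ.mono fun _ hy => hlow.trans_le hy.1)
  refine ⟨M, fun n => hM _ ⟨?_, ?_⟩⟩
  · gcongr
    linarith [n.cast_nonneg (α := ℝ)]
  · linarith [show 0 < 1 / ((n : ℝ) + 1 + x) by positivity]

section LewisSeries

variable {V : Type*} [NormedAddCommGroup V] [NormedSpace ℂ V]
  (η : SL2Z →* Module.End ℂ V) (ν : ℂ) (ψ : ℝ → V)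

noncomputable def lewisTerm (x : ℝ) (n : ℕ) : V :=
  (((n : ℝ) + 1 + x : ℝ) : ℂ) ^ (-2 * ν - 1) •
    η (Tm' * Tm ^ n)⁻¹ (ψ (1 - 1 / ((n : ℝ) + 1 + x)))

lemma map_Tm_lewisTerm_zero {x : ℝ} (hx : x + 1 ≠ 0) :
    η Tm (lewisTerm η ν ψ x 0) =
      ((x : ℂ) + 1) ^ (-2 * ν - 1) • η (Sm * Tm⁻¹) (ψ (x / (x + 1))) := by
  have harg : (1 : ℝ) - 1 / (x + 1) = x / (x + 1) := by field_simp; ring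
  rw [lewisTerm, map_smul, ← Module.End.mul_apply, ← map_mul, pow_zero, mul_one, Tm_mul_inv_Tm',
    Nat.cast_zero, zero_add, add_comm 1 x, harg, ofReal_add, ofReal_one]

lemma map_Tm_lewisTerm_succ (x : ℝ) (n : ℕ) :
    η Tm (lewisTerm η ν ψ x (n + 1)) = lewisTerm η ν ψ (x + 1) n := by
  have harg : ((n + 1 : ℕ) : ℝ) + 1 + x = (n : ℝ) + 1 + (x + 1) := by push_cast; ring
  simp only [lewisTerm, map_smul, harg, ← Module.End.mul_apply, ← map_mul,
    Tm_mul_inv_Tm'_mul_Tm_pow_succ]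

variable [FiniteDimensional ℂ V]

lemma exists_bound_norm_map_inv_Tm'_mul_Tm_pow {N : ℕ} (hN : 0 < N) (hord : η Tm ^ N = 1) :
    ∃ C, 0 ≤ C ∧ ∀ (n : ℕ) (v : V), ‖η (Tm' * Tm ^ n)⁻¹ v‖ ≤ C * ‖v‖ := by
  refine LinearMap.exists_norm_apply_le_of_finite_range _ <|
    ((Set.finite_Iio N).image fun k => η (Tm' * Tm ^ k)⁻¹).subset ?_
  rintro _ ⟨n, rfl⟩
  exact ⟨n % N, Nat.mod_lt n hN, (η.map_inv_mul_pow_mod Tm' Tm hord n).symm⟩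

lemma summable_norm_lewisTerm {N : ℕ} (hN : 0 < N) (hord : η Tm ^ N = 1) (hν : 0 < ν.re)
    (hψ : ContinuousOn ψ (Set.Ioi 0)) {x : ℝ} (hx : 0 < x) :
    Summable fun n => ‖lewisTerm η ν ψ x n‖ := by
  obtain ⟨C, hC0, hC⟩ := exists_bound_norm_map_inv_Tm'_mul_Tm_pow η hN hord
  obtain ⟨M, hM⟩ := exists_bound_norm_apply_one_sub_one_div hψ hx
  have hp : (-2 * ν - 1).re < -1 := by
    simp only [neg_mul, sub_re, neg_re, mul_re, re_ofNat, im_ofNat, zero_mul, sub_zero, one_re]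
    linarith
  refine .of_nonneg_of_le (fun n => norm_nonneg _) (fun n => ?_)
    ((summable_add_rpow hp hx.le).mul_left (C * M))
  rw [lewisTerm, norm_smul, norm_cpow_eq_rpow_re_of_pos (by positivity), mul_comm (C * M)]
  gcongr
  exact (hC n _).trans (by gcongr; exact hM n)

lemma map_Tm_tsum_lewisTerm {x : ℝ} (hx : x + 1 ≠ 0) (hs : Summable (lewisTerm η ν ψ x)) :
    η Tm (∑' n, lewisTerm η ν ψ x n) =
      ((x : ℂ) + 1) ^ (-2 * ν - 1) • η (Sm * Tm⁻¹) (ψ (x / (x + 1))) +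
        ∑' n, lewisTerm η ν ψ (x + 1) n := by
  rw [hs.tsum_eq_zero_add, map_add, ((summable_nat_add_iff 1).mpr hs).map_tsum (η Tm)
    (η Tm).continuous_of_finiteDimensional, map_Tm_lewisTerm_zero η ν ψ hx]
  simp only [map_Tm_lewisTerm_succ]

end LewisSeries

theorem stmt12_general {V : Type*} [NormedAddCommGroup V] [NormedSpace ℂ V]
    [FiniteDimensional ℂ V]
    (η : SL2Z →* Module.End ℂ V)
    (N : ℕ) (hN : 0 < N) (hord : η Tm ^ N = 1)
    (ν : ℂ) (hν : 0 < ν.re)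
    (ψ : ℝ → V) (hψcont : ContinuousOn ψ (Set.Ioi (0 : ℝ)))
    (hψlewis : ∀ x : ℝ, 0 < x → LewisEqR η ν ψ x)
    (Qinf : ℝ → V)
    (hQinf : ∀ x : ℝ, 0 < x →
      Qinf x = ψ x -
        ∑' n : ℕ, (((((n : ℝ) + 1 + x : ℝ) : ℂ)) ^ (-2 * ν - 1)) •
          η ((Tm' * Tm ^ n)⁻¹) (ψ (1 - 1 / ((n : ℝ) + 1 + x)))) :
    (∀ x : ℝ, 0 < x →
      Summable (fun n : ℕ => ‖(((((n : ℝ) + 1 + x : ℝ) : ℂ)) ^ (-2 * ν - 1)) •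
        η ((Tm' * Tm ^ n)⁻¹) (ψ (1 - 1 / ((n : ℝ) + 1 + x)))‖)) ∧
    ∀ x : ℝ, 0 < x → Qinf (x + 1) = η Tm (Qinf x) := by
  have hsum (x : ℝ) (hx : 0 < x) : Summable fun n => ‖lewisTerm η ν ψ x n‖ :=
    summable_norm_lewisTerm η ν ψ hN hord hν hψcont hx
  refine ⟨hsum, fun x hx => ?_⟩
  have hQ (y : ℝ) (hy : 0 < y) : Qinf y = ψ y - ∑' n, lewisTerm η ν ψ y n := hQinf y hy
  rw [hQ (x + 1) (by positivity), hQ x hx, map_sub, hψlewis x hx,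
    map_Tm_tsum_lewisTerm η ν ψ (by positivity) (hsum x hx).of_norm]
  abel

/-- If `Re(ν) > 0` and `ψ` is continuous on `(0,∞)` and satisfies the Lewis
equation there, then
`Q_∞(x) = ψ(x) − Σ_{n≥1} (n+x)^{−2ν−1} η(T'Tⁿ⁻¹)⁻¹ ψ(1−1/(n+x))`
(an absolutely convergent series) satisfies `Q_∞(x+1) = η(T)·Q_∞(x)` for `x > 0`. -/
theorem stmt12 {V : Type*} [NormedAddCommGroup V] [NormedSpace ℂ V]
    [FiniteDimensional ℂ V] [Nontrivial V]
    (η : SL2Z →* Module.End ℂ V) (hη : η negI = 1)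
    (N : ℕ) (hN : 0 < N) (hord : η Tm ^ N = 1)
    (ν : ℂ) (hν : 0 < ν.re)
    (ψ : ℝ → V) (hψcont : ContinuousOn ψ (Set.Ioi (0 : ℝ)))
    (hψlewis : ∀ x : ℝ, 0 < x → LewisEqR η ν ψ x)
    (Qinf : ℝ → V)
    (hQinf : ∀ x : ℝ, 0 < x →
      Qinf x = ψ x -
        ∑' n : ℕ, (((((n : ℝ) + 1 + x : ℝ) : ℂ)) ^ (-2 * ν - 1)) •
          η ((Tm' * Tm ^ n)⁻¹) (ψ (1 - 1 / ((n : ℝ) + 1 + x)))) :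
    (∀ x : ℝ, 0 < x →
      Summable (fun n : ℕ => ‖(((((n : ℝ) + 1 + x : ℝ) : ℂ)) ^ (-2 * ν - 1)) •
        η ((Tm' * Tm ^ n)⁻¹) (ψ (1 - 1 / ((n : ℝ) + 1 + x)))‖)) ∧
    ∀ x : ℝ, 0 < x → Qinf (x + 1) = η Tm (Qinf x) :=
  stmt12_general η N hN hord ν hν ψ hψcont hψlewis Qinf hQinf
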